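/- arXiv:1907.12373 — 3 statements merged into one kernel-verified Lean document; each statement's English description precedes it below -/
import Mathlib

section
/- The integral from 0 to infinity of e^{-t} ln(t) dt equals minus the Euler–Mascheroni constant γ. -/
open MeasureTheory Real

theorem exp_neg_mul_log_integral :
    ∫ t in Set.Ioi (0:ℝ), Real.exp (-t) * Real.log t = -Real.eulerMascheroniConstant := by
  have h1 : HasDerivAt Complex.GammaIntegral
      (∫ t : ℝ in Set.Ioi 0, (t : ℂ) ^ ((1:ℂ) - 1) * (Real.log t * Real.exp (-t))) 1 :=
    Complex.hasDerivAt_GammaIntegral (by norm_num)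
  have heq : (∫ t : ℝ in Set.Ioi 0, (t : ℂ) ^ ((1:ℂ) - 1) * (Real.log t * Real.exp (-t)))
      = ((∫ t : ℝ in Set.Ioi 0, Real.exp (-t) * Real.log t : ℝ) : ℂ) := by
    refine Eq.trans ?_ (integral_ofReal (𝕜 := ℂ))
    refine setIntegral_congr_fun measurableSet_Ioi (fun t ht => ?_)
    simp only [sub_self, Complex.cpow_zero, one_mul, Complex.ofReal_mul, mul_comm]
    norm_num [mul_comm]
  rw [heq] at h1
  have h2 : HasDerivAt Complex.Gamma
      ((∫ t : ℝ in Set.Ioi 0, Real.exp (-t) * Real.log t : ℝ) : ℂ) 1 := by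
    refine h1.congr_of_eventuallyEq ?_
    filter_upwards [(isOpen_lt continuous_const Complex.continuous_re).mem_nhds
      (by norm_num : (0:ℂ).re < (1:ℂ).re)] with s hs
    exact Complex.Gamma_eq_integral hs
  have h3 := Complex.hasDerivAt_Gamma_one
  have := h2.unique h3
  exact_mod_cast this
end

section
/- The integral from 0 to 1 of (1 − e^{-t} − e^{-1/t})/t dt equals the Euler–Mascheroni constant γ. -/
/-!
Since `Γ'(1) = -γ` and `Γ'(1) = ∫₀^∞ log t · e^{-t} dt`, it suffices to identify the integral
with `-∫₀^∞ log t · e^{-t} dt`. On `(0, 1]`, integrating by parts against `log` turns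
`(1 - e^{-t}) / t` into `-log t · e^{-t}`; the substitution `t ↦ 1/t` carries `e^{-1/t} / t` on
`(0, 1)` to `e^{-t} / t` on `(1, ∞)`, where a second integration by parts turns it into
`log t · e^{-t}`.
-/

open MeasureTheory Real Set Filter Topology Asymptotics

lemma abs_log_le_rpow_add_rpow_neg {t ε : ℝ} (ht : 0 < t) (hε : 0 < ε) :
    |log t| ≤ (t ^ ε + t ^ (-ε)) / ε := by
  have h_pos : log t ≤ t ^ ε / ε := log_le_rpow_div ht.le hε
  have h_neg : -log t ≤ t ^ (-ε) / ε := by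
    simpa [log_inv, inv_rpow ht.le, rpow_neg ht.le] using log_le_rpow_div (inv_pos.2 ht).le hε
  rw [abs_le, add_div]
  constructor <;>
    linarith [div_pos (rpow_pos_of_pos ht ε) hε, div_pos (rpow_pos_of_pos ht (-ε)) hε]

lemma integrableOn_log_mul_exp_neg : IntegrableOn (fun t => log t * exp (-t)) (Ioi 0) := by
  have h_dom : IntegrableOn (fun t => 2 * (exp (-t) * t ^ ((3 / 2 : ℝ) - 1) +
      exp (-t) * t ^ ((1 / 2 : ℝ) - 1))) (Ioi 0) :=
    ((GammaIntegral_convergent (by norm_num)).add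
      (GammaIntegral_convergent (by norm_num))).const_mul 2
  refine h_dom.mono' (by fun_prop) ?_
  filter_upwards [ae_restrict_mem measurableSet_Ioi] with t (ht : 0 < t)
  have h_log := abs_log_le_rpow_add_rpow_neg ht one_half_pos
  rw [norm_mul, norm_of_nonneg (exp_pos _).le, norm_eq_abs]
  norm_num at h_log ⊢
  nlinarith [exp_pos (-t)]

lemma integral_log_mul_exp_neg : ∫ t in Ioi 0, log t * exp (-t) = -eulerMascheroniConstant := by
  have h_integral : HasDerivAt Complex.Gamma
      (∫ t : ℝ in Ioi 0, (t : ℂ) ^ ((1 : ℂ) - 1) * (log t * exp (-t))) 1 := by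
    refine (Complex.hasDerivAt_GammaIntegral (by simp)).congr_of_eventuallyEq ?_
    filter_upwards [(Complex.continuous_re.isOpen_preimage _ isOpen_Ioi).mem_nhds
      (by simp : (1 : ℂ) ∈ Complex.re ⁻¹' Ioi 0)] with s hs
    exact Complex.Gamma_eq_integral hs
  have h_eq := h_integral.unique Complex.hasDerivAt_Gamma_one
  simp only [sub_self, Complex.cpow_zero, one_mul] at h_eq
  have h_cast : ((∫ t in Ioi 0, log t * exp (-t) : ℝ) : ℂ) = -eulerMascheroniConstant := by
    simpa only [← integral_complex_ofReal, Complex.ofReal_mul] using h_eq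
  exact_mod_cast h_cast

lemma integral_Ioo_zero_one_comp_inv_div (f : ℝ → ℝ) :
    ∫ t in Ioo 0 1, f t⁻¹ / t = ∫ t in Ioi 1, f t / t := by
  have h_image : Inv.inv '' Ioi (1 : ℝ) = Ioo 0 1 := by
    rw [image_inv_eq_inv, inv_Ioi₀ one_pos, inv_one]
  rw [← h_image, integral_image_eq_integral_abs_deriv_smul measurableSet_Ioi
    (fun x hx => (hasDerivAt_inv (zero_lt_one.trans hx).ne').hasDerivWithinAt) inv_injective.injOn]
  refine setIntegral_congr_fun measurableSet_Ioi fun x (hx : 1 < x) => ?_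
  have hx0 : x ≠ 0 := (zero_lt_one.trans hx).ne'
  simp only [abs_neg, abs_inv, abs_pow, abs_of_pos (zero_lt_one.trans hx), smul_eq_mul, inv_inv]
  field_simp

lemma integrableOn_exp_neg_inv_div_Ioo :
    IntegrableOn (fun t => exp (-t⁻¹) / t) (Ioo 0 1) := by
  refine Measure.integrableOn_of_bounded (M := 1) (by simp)
    (by fun_prop : Measurable fun t => exp (-t⁻¹) / t).aestronglyMeasurable ?_
  filter_upwards [ae_restrict_mem measurableSet_Ioo] with t ht
  rw [norm_of_nonneg (div_nonneg (exp_pos _).le ht.1.le), div_le_one ht.1, exp_neg,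
    inv_le_comm₀ (exp_pos _) ht.1]
  linarith [add_one_le_exp t⁻¹]

lemma integrableOn_exp_neg_div_Ioi {a : ℝ} (ha : 0 < a) :
    IntegrableOn (fun t => exp (-t) / t) (Ioi a) := by
  have h_exp : IntegrableOn (fun t => exp (-t)) (Ioi a) := by
    simpa using exp_neg_integrableOn_Ioi a one_pos
  refine (h_exp.div_const a).mono'
    (by fun_prop : Measurable fun t => exp (-t) / t).aestronglyMeasurable ?_
  filter_upwards [ae_restrict_mem measurableSet_Ioi] with t (ht : a < t)
  rw [norm_of_nonneg (div_nonneg (exp_pos _).le (ha.trans ht).le)]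
  exact div_le_div_of_nonneg_left (exp_pos _).le ha ht.le

lemma integral_exp_neg_div_Ioi_one :
    ∫ t in Ioi 1, exp (-t) / t = ∫ t in Ioi 1, log t * exp (-t) := by
  have h_deriv : ∀ t ∈ Ici (1 : ℝ), HasDerivAt (fun t => exp (-t) * log t)
      (exp (-t) / t - log t * exp (-t)) t := by
    intro t (ht : 1 ≤ t)
    refine ((hasDerivAt_neg t).exp.mul
      (hasDerivAt_log (zero_lt_one.trans_le ht).ne')).congr_deriv ?_
    ring
  have h_lim : Tendsto (fun t => exp (-t) * log t) atTop (𝓝 0) := by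
    have h_exp_mul_id : Tendsto (fun t => exp (-t) * t) atTop (𝓝 0) := by
      simpa [mul_comm] using tendsto_pow_mul_exp_neg_atTop_nhds_zero 1
    exact ((isBigO_refl (fun t => exp (-t)) atTop).mul_isLittleO
      isLittleO_log_id_atTop).trans_tendsto h_exp_mul_id
  have h_int_div := integrableOn_exp_neg_div_Ioi one_pos
  have h_int_log := integrableOn_log_mul_exp_neg.mono_set (Ioi_subset_Ioi zero_le_one)
  have h_ftc := integral_Ioi_of_hasDerivAt_of_tendsto' h_deriv (h_int_div.sub h_int_log) h_lim
  rw [integral_sub h_int_div h_int_log] at h_ftc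
  simp only [log_one, mul_zero, sub_zero] at h_ftc
  exact sub_eq_zero.1 h_ftc

lemma tendsto_one_sub_exp_neg_mul_log_zero :
    Tendsto (fun t => (1 - exp (-t)) * log t) (𝓝 0) (𝓝 0) := by
  have h_lin : (fun t => 1 - exp (-t)) =O[𝓝 0] fun t : ℝ => t := by
    simpa using ((hasDerivAt_neg (0 : ℝ)).exp.const_sub 1).isBigO_sub
  have h_mul_log : Tendsto (fun t => t * log t) (𝓝 0) (𝓝 0) := by
    simpa using continuous_mul_log.tendsto 0
  simpa using (h_lin.mul (isBigO_refl log _)).trans_tendsto h_mul_log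

lemma integrableOn_one_sub_exp_neg_div_Ioc :
    IntegrableOn (fun t => (1 - exp (-t)) / t) (Ioc 0 1) := by
  refine Measure.integrableOn_of_bounded (M := 1) (by simp)
    (by fun_prop : Measurable fun t => (1 - exp (-t)) / t).aestronglyMeasurable ?_
  filter_upwards [ae_restrict_mem measurableSet_Ioc] with t ht
  rw [norm_of_nonneg (div_nonneg (by simpa using ht.1.le) ht.1.le), div_le_one ht.1]
  linarith [add_one_le_exp (-t)]

lemma integral_one_sub_exp_neg_div_Ioc :
    ∫ t in Ioc 0 1, (1 - exp (-t)) / t = -∫ t in Ioc 0 1, log t * exp (-t) := by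
  have h_deriv : ∀ t ∈ Ioo (0 : ℝ) 1, HasDerivAt (fun t => (1 - exp (-t)) * log t)
      ((1 - exp (-t)) / t + log t * exp (-t)) t := by
    rintro t ⟨ht, -⟩
    refine (((hasDerivAt_neg t).exp.const_sub 1).mul (hasDerivAt_log ht.ne')).congr_deriv ?_
    ring
  have h_int_log : IntegrableOn (fun t => log t * exp (-t)) (Ioc 0 1) :=
    integrableOn_log_mul_exp_neg.mono_set Ioc_subset_Ioi_self
  have h_cont_one : ContinuousAt (fun t => (1 - exp (-t)) * log t) 1 := by
    fun_prop (disch := norm_num)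
  have h_ftc := intervalIntegral.integral_eq_sub_of_hasDerivAt_of_tendsto zero_lt_one h_deriv
    ((intervalIntegrable_iff_integrableOn_Ioc_of_le zero_le_one).2
      (integrableOn_one_sub_exp_neg_div_Ioc.add h_int_log))
    (tendsto_one_sub_exp_neg_mul_log_zero.mono_left nhdsWithin_le_nhds)
    (h_cont_one.tendsto.mono_left nhdsWithin_le_nhds)
  rw [intervalIntegral.integral_of_le zero_le_one,
    integral_add integrableOn_one_sub_exp_neg_div_Ioc h_int_log] at h_ftc
  simp only [log_one, mul_zero, sub_zero] at h_ftc
  exact eq_neg_of_add_eq_zero_left h_ftc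

theorem integral_gamma_rep :
    ∫ t in Set.Ioo (0:ℝ) 1, (1 - Real.exp (-t) - Real.exp (-1/t)) / t
      = Real.eulerMascheroniConstant := by
  have h_split : ∫ t in Ioo (0 : ℝ) 1, (1 - exp (-t) - exp (-1 / t)) / t
      = (∫ t in Ioc (0 : ℝ) 1, (1 - exp (-t)) / t) - ∫ t in Ioo (0 : ℝ) 1, exp (-t⁻¹) / t := by
    rw [integral_Ioc_eq_integral_Ioo, ← integral_sub
      (integrableOn_one_sub_exp_neg_div_Ioc.mono_set Ioo_subset_Ioc_self)
      integrableOn_exp_neg_inv_div_Ioo]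
    simp only [sub_div, neg_div, one_div]
  have h_union : (∫ t in Ioc (0 : ℝ) 1, log t * exp (-t)) + ∫ t in Ioi (1 : ℝ), log t * exp (-t)
      = ∫ t in Ioi (0 : ℝ), log t * exp (-t) := by
    rw [← setIntegral_union Ioc_disjoint_Ioi_same measurableSet_Ioi
      (integrableOn_log_mul_exp_neg.mono_set Ioc_subset_Ioi_self)
      (integrableOn_log_mul_exp_neg.mono_set (Ioi_subset_Ioi zero_le_one)),
      Ioc_union_Ioi_eq_Ioi zero_le_one]
  rw [h_split, integral_one_sub_exp_neg_div_Ioc,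
    integral_Ioo_zero_one_comp_inv_div (fun t => exp (-t)), integral_exp_neg_div_Ioi_one]
  linarith [integral_log_mul_exp_neg]
end

section
/- lim_{x→+∞} Si(x) = π/2, where Si(x) = ∫₀^x sin t / t dt. -/
/-!
Substituting `t = (2n+1)s` gives `Si ((2n+1)π/2) = ∫₀^{π/2} sin ((2n+1)s) / s ds`. Since
`sin ((2n+1)s) = sin s · D_n(s)` for a trigonometric polynomial `D_n` with `∫₀^{π/2} D_n = π/2`,
this equals `π/2 + ∫₀^{π/2} sin ((2n+1)s) (1/s - 1/sin s) ds`, and the last integral tends to `0`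
by the Riemann–Lebesgue lemma because `1/s - 1/sin s` is bounded on `(0, π/2]`. Integration by
parts gives `|∫_a^b sin t / t dt| ≤ 2/a`, so `Si` is Cauchy at infinity and its limit is the limit
along the sequence `(2n+1)π/2`.
-/

open MeasureTheory Real Filter Set

theorem tendsto_atTop_of_dist_le_of_tendsto_comp {α β ι : Type*} [PseudoMetricSpace α]
    [Preorder β] {l : Filter ι} [l.NeBot] {f : β → α} {g : β → ℝ} {u : ι → β} {L : α}
    (hfg : ∀ᶠ x in atTop, ∀ y, x ≤ y → dist (f x) (f y) ≤ g x)
    (hg : Tendsto g atTop (nhds 0)) (hu : Tendsto u l atTop) (hfu : Tendsto (f ∘ u) l (nhds L)) :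
    Tendsto f atTop (nhds L) := by
  have hdist : ∀ᶠ x in atTop, dist (f x) L ≤ g x := hfg.mono fun x hx =>
    le_of_tendsto (tendsto_const_nhds.dist hfu)
      ((hu.eventually_ge_atTop x).mono fun n hn => hx _ hn)
  exact tendsto_iff_dist_tendsto_zero.2 (squeeze_zero' (.of_forall fun _ => dist_nonneg) hdist hg)

/-- The integral is minus the imaginary part of the Fourier transform of `f` at `c / (2π)`. -/
theorem tendsto_integral_sin_mul_atTop {f : ℝ → ℝ} (hf : Integrable f) :
    Tendsto (fun c : ℝ => ∫ t, sin (c * t) * f t) atTop (nhds 0) := by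
  have hRL := (Real.tendsto_integral_exp_smul_cocompact (fun t => (f t : ℂ))).comp
    ((tendsto_id.atTop_div_const (by positivity : 0 < 2 * π)).mono_right atTop_le_cocompact)
  have him := (Complex.continuous_im.tendsto 0).comp hRL
  have key : ∀ c : ℝ, (∫ t, Real.fourierChar (-(t * (c / (2 * π)))) • (f t : ℂ)).im =
      -∫ t, sin (c * t) * f t := by
    intro c
    have harg : ∀ t : ℝ, 2 * π * -(t * (c / (2 * π))) = -(c * t) := fun t => by field_simp
    simp only [Circle.smul_def, Real.fourierChar_apply, harg, smul_eq_mul]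
    have hint : Integrable (fun t : ℝ => Complex.exp (↑(-(c * t)) * Complex.I) * (f t : ℂ)) :=
      hf.ofReal.bdd_mul (c := 1) (by fun_prop)
        (.of_forall fun t => (Complex.norm_exp_ofReal_mul_I _).le)
    rw [← Complex.imCLM_apply, ← Complex.imCLM.integral_comp_comm hint,
      ← MeasureTheory.integral_neg]
    congr 1 with t
    rw [Complex.imCLM_apply, Complex.mul_im, Complex.exp_ofReal_mul_I_im,
      Complex.exp_ofReal_mul_I_re]
    simp [sin_neg]
  simpa [Function.comp_def, key] using him.neg

theorem tendsto_setIntegral_sin_mul_atTop {f : ℝ → ℝ} {s : Set ℝ} (hs : MeasurableSet s)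
    (hf : IntegrableOn f s) :
    Tendsto (fun c : ℝ => ∫ t in s, sin (c * t) * f t) atTop (nhds 0) := by
  refine (tendsto_integral_sin_mul_atTop (hf.integrable_indicator hs)).congr fun c => ?_
  rw [← MeasureTheory.integral_indicator hs]
  simp_rw [indicator_mul_right]

/-- `D_n(2t)` for the usual Dirichlet kernel `D_n(x) = 1 + 2 ∑_{k=1}^n cos (k x)`. -/
noncomputable def dirichletKernel (n : ℕ) (t : ℝ) : ℝ :=
  1 + 2 * ∑ k ∈ Finset.range n, cos (2 * (k + 1) * t)

theorem continuous_dirichletKernel (n : ℕ) : Continuous (dirichletKernel n) := by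
  unfold dirichletKernel
  fun_prop

theorem sin_mul_dirichletKernel (n : ℕ) (t : ℝ) :
    sin t * dirichletKernel n t = sin ((2 * n + 1) * t) := by
  induction n with
  | zero => simp [dirichletKernel]
  | succ n ih =>
    have hstep : sin ((2 * (n + 1 : ℕ) + 1) * t) - sin ((2 * n + 1) * t) =
        2 * sin t * cos (2 * (n + 1) * t) := by
      rw [sin_sub_sin]; push_cast; ring_nf
    simp only [dirichletKernel, Finset.sum_range_succ] at ih ⊢
    push_cast at hstep ⊢
    linear_combination ih - hstep

theorem integral_dirichletKernel (n : ℕ) : ∫ t in (0)..(π / 2), dirichletKernel n t = π / 2 := by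
  have hcos : ∀ k : ℕ, ∫ t in (0)..(π / 2), cos (2 * (k + 1) * t) = 0 := fun k => by
    have hk : (2 * (k + 1) : ℝ) ≠ 0 := by positivity
    rw [intervalIntegral.integral_comp_mul_left _ hk, integral_cos, mul_zero, sin_zero, sub_zero,
      show 2 * (k + 1 : ℝ) * (π / 2) = (k + 1 : ℕ) * π by push_cast; ring, sin_nat_mul_pi,
      smul_zero]
  have hint : ∀ k : ℕ, IntervalIntegrable (fun t => cos (2 * (k + 1) * t)) volume 0 (π / 2) :=
    fun k => (by fun_prop : Continuous fun t : ℝ => cos (2 * (k + 1) * t)).intervalIntegrable _ _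
  have hsum : IntervalIntegrable (fun t => 2 * ∑ k ∈ Finset.range n, cos (2 * (k + 1) * t))
      volume 0 (π / 2) := (by fun_prop : Continuous _).intervalIntegrable _ _
  simp only [dirichletKernel]
  rw [intervalIntegral.integral_add intervalIntegrable_const hsum,
    intervalIntegral.integral_const_mul, intervalIntegral.integral_finsetSum fun k _ => hint k]
  simp [hcos]

/-- From `|t - sin t| ≤ t³/6` and Jordan's inequality `2t/π ≤ sin t`:
`|t⁻¹ - (sin t)⁻¹| ≤ πt/12 ≤ π²/24`. -/
theorem abs_inv_sub_inv_sin_le_one {t : ℝ} (ht₀ : 0 < t) (ht : t ≤ π / 2) :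
    |t⁻¹ - (sin t)⁻¹| ≤ 1 := by
  have hsin : 2 / π * t ≤ sin t := mul_le_sin ht₀.le ht
  have hsin₀ : 0 < sin t := lt_of_lt_of_le (by positivity) hsin
  rw [inv_sub_inv ht₀.ne' hsin₀.ne', abs_div, abs_sub_comm, abs_of_pos (mul_pos ht₀ hsin₀),
    div_le_one (mul_pos ht₀ hsin₀)]
  have hcube : |t - sin t| ≤ t ^ 3 / 6 := by simpa [abs_of_pos ht₀] using abs_sub_sin_le t
  have hπ : π * π ≤ 24 := by nlinarith [pi_lt_four, pi_pos]
  have : t ^ 2 / 6 ≤ 2 / π * t := by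
    rw [div_mul_eq_mul_div, le_div_iff₀ pi_pos]
    nlinarith
  nlinarith

theorem integrableOn_inv_sub_inv_sin : IntegrableOn (fun t => t⁻¹ - (sin t)⁻¹) (Ioc 0 (π / 2)) :=
  Measure.integrableOn_of_bounded (M := 1) measure_Ioc_lt_top.ne
    (by fun_prop : Measurable fun t : ℝ => t⁻¹ - (sin t)⁻¹).aestronglyMeasurable
    ((ae_restrict_mem measurableSet_Ioc).mono fun _ ht => abs_inv_sub_inv_sin_le_one ht.1 ht.2)

theorem intervalIntegrable_sin_div (a b : ℝ) :
    IntervalIntegrable (fun t => sin t / t) volume a b := by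
  refine IntervalIntegrable.mono_fun' (g := fun _ => 1) intervalIntegrable_const
    (by fun_prop : Measurable fun t : ℝ => sin t / t).aestronglyMeasurable (.of_forall fun t => ?_)
  rcases eq_or_ne t 0 with rfl | ht
  · simp
  · simpa [← sinc_of_ne_zero ht] using abs_sinc_le_one t

theorem abs_integral_sin_div_le {a b : ℝ} (ha : 0 < a) (hab : a ≤ b) :
    |∫ t in a..b, sin t / t| ≤ 2 / a := by
  have hpos : ∀ t ∈ uIcc a b, 0 < t := fun t ht => ha.trans_le (uIcc_of_le hab ▸ ht).1
  have hinv : ∀ t ∈ uIcc a b, HasDerivAt (fun t : ℝ => t⁻¹) (-(t ^ 2)⁻¹) t :=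
    fun t ht => hasDerivAt_inv (hpos t ht).ne'
  have hcont : ContinuousOn (fun t : ℝ => (t ^ 2)⁻¹) (uIcc a b) :=
    (continuousOn_pow 2).inv₀ fun t ht => pow_ne_zero 2 (hpos t ht).ne'
  have hparts : ∫ t in a..b, sin t / t =
      cos a / a - cos b / b - ∫ t in a..b, (t ^ 2)⁻¹ * cos t := by
    have := intervalIntegral.integral_mul_deriv_eq_deriv_mul (v := fun t => -cos t) hinv
      (fun t _ => (hasDerivAt_cos t).neg.congr_deriv (neg_neg _)) hcont.neg.intervalIntegrable
      (continuous_sin.intervalIntegrable a b)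
    simp only [div_eq_inv_mul] at this ⊢
    rw [this]; simp only [neg_mul_neg]; ring
  have hsq : ∫ t in a..b, (t ^ 2)⁻¹ = a⁻¹ - b⁻¹ := by
    rw [intervalIntegral.integral_eq_sub_of_hasDerivAt (f := fun t => -t⁻¹)
      (fun t ht => (hinv t ht).neg.congr_deriv (neg_neg _)) hcont.intervalIntegrable]
    ring
  have hrem : |∫ t in a..b, (t ^ 2)⁻¹ * cos t| ≤ a⁻¹ - b⁻¹ := by
    rw [← hsq, ← Real.norm_eq_abs]
    refine intervalIntegral.norm_integral_le_of_norm_le hab (.of_forall fun t ht => ?_)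
      hcont.intervalIntegrable
    rw [norm_mul, norm_inv, norm_pow, Real.norm_eq_abs, sq_abs]
    exact mul_le_of_le_one_right (by positivity) (abs_cos_le_one t)
  have hbdry : ∀ x, 0 < x → |cos x / x| ≤ x⁻¹ := fun x hx => by
    rw [abs_div, abs_of_pos hx, div_eq_mul_inv]
    exact mul_le_of_le_one_left (by positivity) (abs_cos_le_one x)
  have hb : b⁻¹ ≤ a⁻¹ := inv_anti₀ ha hab
  calc |∫ t in a..b, sin t / t|
      ≤ |cos a / a| + |cos b / b| + |∫ t in a..b, (t ^ 2)⁻¹ * cos t| := by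
        rw [hparts]; exact (abs_sub _ _).trans (add_le_add (abs_sub _ _) le_rfl)
    _ ≤ a⁻¹ + b⁻¹ + (a⁻¹ - b⁻¹) := by
        gcongr
        exacts [hbdry a ha, hbdry b (ha.trans_le hab)]
    _ = 2 / a := by ring

theorem integral_sin_div_eq_integral_sin_mul_div (c b : ℝ) :
    ∫ t in (0)..(c * b), sin t / t = ∫ t in (0)..b, sin (c * t) / t := by
  have hsubst := intervalIntegral.mul_integral_comp_mul_left (a := 0) (b := b) (c := c)
    (f := fun t => sin t / t)
  rw [mul_zero] at hsubst
  rw [← hsubst, ← intervalIntegral.integral_const_mul]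
  refine intervalIntegral.integral_congr fun t _ => ?_
  rcases eq_or_ne c 0 with rfl | hc
  · simp
  rcases eq_or_ne t 0 with rfl | ht
  · simp
  field_simp

theorem integral_sin_odd_mul_div_eq (n : ℕ) :
    ∫ t in (0)..(π / 2), sin ((2 * n + 1) * t) / t =
      π / 2 + ∫ t in Ioc 0 (π / 2), sin ((2 * n + 1) * t) * (t⁻¹ - (sin t)⁻¹) := by
  have hpi : (0 : ℝ) ≤ π / 2 := by positivity
  have hsplit : EqOn (fun t => sin ((2 * n + 1) * t) / t)
      (fun t => dirichletKernel n t + sin ((2 * n + 1) * t) * (t⁻¹ - (sin t)⁻¹))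
      (Ioc 0 (π / 2)) := by
    intro t ht
    have hsin : sin t ≠ 0 := (sin_pos_of_pos_of_lt_pi ht.1 (by linarith [ht.2, pi_pos])).ne'
    simp only [← sin_mul_dirichletKernel]
    field_simp
    ring
  have hrem : IntegrableOn (fun t => sin ((2 * n + 1) * t) * (t⁻¹ - (sin t)⁻¹)) (Ioc 0 (π / 2)) :=
    integrableOn_inv_sub_inv_sin.bdd_mul (c := 1) (by fun_prop)
      (.of_forall fun _ => abs_sin_le_one _)
  rw [intervalIntegral.integral_of_le hpi, setIntegral_congr_fun measurableSet_Ioc hsplit,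
    integral_add
      ((continuous_dirichletKernel n).integrableOn_Icc.mono_set Ioc_subset_Icc_self) hrem,
    ← intervalIntegral.integral_of_le hpi, integral_dirichletKernel]

theorem tendsto_integral_sin_odd_mul_div :
    Tendsto (fun n : ℕ => ∫ t in (0)..(π / 2), sin ((2 * n + 1) * t) / t) atTop (nhds (π / 2)) := by
  have hodd : Tendsto (fun n : ℕ => (2 * n + 1 : ℝ)) atTop atTop :=
    tendsto_atTop_add_const_right _ _ (tendsto_natCast_atTop_atTop.const_mul_atTop two_pos)
  simpa only [integral_sin_odd_mul_div_eq, Function.comp_def, add_zero] using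
    ((tendsto_setIntegral_sin_mul_atTop measurableSet_Ioc integrableOn_inv_sub_inv_sin).comp
      hodd).const_add (π / 2)

theorem Si_tendsto_pi_div_two :
    Tendsto (fun x : ℝ => ∫ t in (0:ℝ)..x, Real.sin t / t) atTop (nhds (π / 2)) := by
  have hodd : Tendsto (fun n : ℕ => (2 * n + 1 : ℝ) * (π / 2)) atTop atTop :=
    (tendsto_atTop_add_const_right _ _
      (tendsto_natCast_atTop_atTop.const_mul_atTop two_pos)).atTop_mul_const (by positivity)
  have htail : ∀ᶠ x in atTop, ∀ y, x ≤ y →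
      dist (∫ t in (0)..x, sin t / t) (∫ t in (0)..y, sin t / t) ≤ 2 / x := by
    filter_upwards [eventually_gt_atTop 0] with x hx y hxy
    rw [dist_comm, Real.dist_eq, intervalIntegral.integral_interval_sub_left
      (intervalIntegrable_sin_div _ _) (intervalIntegrable_sin_div _ _)]
    exact abs_integral_sin_div_le hx hxy
  refine tendsto_atTop_of_dist_le_of_tendsto_comp htail
    (tendsto_const_nhds.div_atTop tendsto_id) hodd ?_
  simpa only [Function.comp_def, integral_sin_div_eq_integral_sin_mul_div] using
    tendsto_integral_sin_odd_mul_div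
end
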